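/- arXiv:2004.08538 — 5 statements merged into one kernel-verified Lean document; each statement's English description precedes it below -/
import Mathlib

section
/- Let Q_n be the monic orthogonal polynomials satisfying x·Q_n(x) = Q_{n+1}(x) + n²·Q_{n-1}(x), Q_{-1}=0, Q_0=1. Then the 2n-th moment of the orthogonalizing measure equals the Euler number E_{2n} (with positive sign), i.e., the moments are 1, 0, 1, 0, 5, 0, 61, 0, 1385, .... -/
open Real

/-- Coefficients of `J^k e_0` in the tridiagonal (Jacobi) model with zero diagonal and
`γ_{n-1} = n²`: `jacVec k n` is the coefficient of `e_n` in `G^k e_0`, where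
`G e_n = e_{n+1} + n² e_{n-1}`. -/
def jacVec : ℕ → ℕ → ℝ
  | 0 => fun n => if n = 0 then 1 else 0
  | (k + 1) => fun n =>
      (if n = 0 then 0 else jacVec k (n - 1)) + ((n + 1 : ℕ) : ℝ) ^ 2 * jacVec k (n + 1)

/-- The `k`-th moment `⟨e_0, J^k e_0⟩` of the measure orthogonalizing the monic
polynomials with `x Q_n = Q_{n+1} + n² Q_{n-1}`. -/
def jacMoment (k : ℕ) : ℝ := jacVec k 0

/-!
Put `f n x = tanⁿ x / cos x`. Since `tan' = 1 + tan²` and `sec' = tan · sec`, one has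
`f n' = n · f (n - 1) + (n + 1) · f (n + 1)`, so the numbers `d k n = (f n)⁽ᵏ⁾(0) / n!` obey the
recursion defining `jacVec`, from the same start `d 0 n = [n = 0]`. Hence the `k`-th derivative of
`sec = f 0` at `0` is the `k`-th moment, and by uniqueness of power series it is also `k!` times the
`k`-th Taylor coefficient of `sec`, read off from the given expansion.
-/

open Filter Topology Nat

theorem iteratedDeriv_eq_factorial_mul_of_hasSum {𝕜 : Type*} [NontriviallyNormedField 𝕜]
    [CompleteSpace 𝕜] [CharZero 𝕜] {f : 𝕜 → 𝕜} {c : ℕ → 𝕜}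
    (h : ∀ᶠ z in 𝓝 0, HasSum (fun n => c n * z ^ n) (f z)) (n : ℕ) :
    iteratedDeriv n f 0 = n ! * c n := by
  have hc : HasFPowerSeriesAt f (FormalMultilinearSeries.ofScalars 𝕜 c) 0 := by
    rw [hasFPowerSeriesAt_iff]
    simpa [FormalMultilinearSeries.coeff_ofScalars, mul_comm] using h
  have hcoeff := FormalMultilinearSeries.ofScalars_series_injective 𝕜 𝕜
    (hc.analyticAt.hasFPowerSeriesAt.eq_formalMultilinearSeries hc)
  rw [← congrFun hcoeff n, mul_div_cancel₀ _ (Nat.cast_ne_zero.2 n.factorial_ne_zero)]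

theorem HasSum.ite_even_mul_pow {R : Type*} [Semiring R] [TopologicalSpace R] [ContinuousAdd R]
    {a : ℕ → R} {x s : R} (h : HasSum (fun n => a n * x ^ (2 * n)) s) :
    HasSum (fun k => (if Even k then a (k / 2) else 0) * x ^ k) s := by
  simpa only [add_zero] using HasSum.even_add_odd
    (f := fun k => (if Even k then a (k / 2) else 0) * x ^ k) (by simpa using h) (m' := 0) (by simp)

noncomputable def tanPowDivCos (n : ℕ) (x : ℝ) : ℝ := tan x ^ n / cos x

theorem contDiffAt_tanPowDivCos (n : ℕ) {x : ℝ} (hx : cos x ≠ 0) :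
    ContDiffAt ℝ ⊤ (tanPowDivCos n) x :=
  ((Real.contDiffAt_tan.2 hx).pow n).div contDiff_cos.contDiffAt hx

theorem hasDerivAt_tanPowDivCos (n : ℕ) {x : ℝ} (hx : cos x ≠ 0) :
    HasDerivAt (tanPowDivCos n)
      (n * tanPowDivCos (n - 1) x + (n + 1) * tanPowDivCos (n + 1) x) x := by
  refine (((hasDerivAt_tan hx).fun_pow n).fun_div (hasDerivAt_cos x) hx).congr_deriv ?_
  have hsin : sin x = tan x * cos x := by rw [tan_eq_sin_div_cos, div_mul_cancel₀ _ hx]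
  have hsec : cos x ^ 2 * (1 + tan x ^ 2) = 1 := by
    rw [tan_eq_sin_div_cos, div_pow]; field_simp; linear_combination sin_sq_add_cos_sq x
  rw [hsin]
  rcases n with _ | m
  · simp only [tanPowDivCos]
    field_simp
    simp
  · simp only [tanPowDivCos, Nat.add_sub_cancel]
    field_simp
    push_cast
    linear_combination (-(m + 1) * tan x ^ m) * hsec

theorem iteratedDeriv_tanPowDivCos_zero (k n : ℕ) :
    iteratedDeriv k (tanPowDivCos n) 0 = n ! * jacVec k n := by
  induction k generalizing n with
  | zero => rcases n with _ | m <;> simp [tanPowDivCos, jacVec]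
  | succ k ih =>
    have hcos : ∀ᶠ x in 𝓝 (0 : ℝ), cos x ≠ 0 :=
      continuous_cos.continuousAt.eventually_ne (by simp)
    have hderiv : deriv (tanPowDivCos n) =ᶠ[𝓝 0]
        fun x => n * tanPowDivCos (n - 1) x + (n + 1) * tanPowDivCos (n + 1) x :=
      hcos.mono fun x hx => (hasDerivAt_tanPowDivCos n hx).deriv
    have hsmooth : ∀ m, ContDiffAt ℝ k (tanPowDivCos m) 0 := fun m =>
      (contDiffAt_tanPowDivCos m (by simp)).of_le le_top
    rw [iteratedDeriv_succ', hderiv.iteratedDeriv_eq,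
      iteratedDeriv_fun_add (contDiffAt_const.mul (hsmooth _)) (contDiffAt_const.mul (hsmooth _)),
      iteratedDeriv_const_mul_field, iteratedDeriv_const_mul_field, ih, ih]
    rcases n with _ | m
    · simp [jacVec]
    · simp only [jacVec, if_neg m.succ_ne_zero, Nat.add_sub_cancel, Nat.factorial_succ]
      push_cast
      ring

theorem iteratedDeriv_one_div_cos_zero (k : ℕ) :
    iteratedDeriv k (fun x => 1 / cos x) 0 = jacMoment k := by
  have h0 : tanPowDivCos 0 = fun x => 1 / cos x := funext fun x => by simp [tanPowDivCos]
  simpa [h0, jacMoment] using iteratedDeriv_tanPowDivCos_zero k 0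

/-- The moments of the measure orthogonalizing the monic polynomials
`x·Q_n = Q_{n+1} + n²·Q_{n-1}` are the Euler (secant) numbers:
the `2n`-th moment equals `E_{2n}` (defined by `sec x = ∑ E_{2n} x^{2n}/(2n)!`)
and the odd moments vanish; so they are `1, 0, 1, 0, 5, 0, 61, 0, 1385, …`. -/
theorem moments_of_n_squared_jacobi_are_euler (E : ℕ → ℝ)
    (hE : ∀ x : ℝ, |x| < π / 2 →
      HasSum (fun n : ℕ => E n * x ^ (2 * n) / ((2 * n).factorial : ℝ)) (1 / Real.cos x)) :
    (∀ n : ℕ, jacMoment (2 * n) = E n) ∧ (∀ n : ℕ, jacMoment (2 * n + 1) = 0) := by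
  have hsec : ∀ᶠ x in 𝓝 0, HasSum
      (fun k => (if Even k then E (k / 2) / (2 * (k / 2)).factorial else 0) * x ^ k)
      (1 / cos x) := by
    filter_upwards [Metric.ball_mem_nhds (0 : ℝ) (half_pos pi_pos)] with x hx
    refine HasSum.ite_even_mul_pow (a := fun n => E n / (2 * n).factorial) ?_
    simpa [mul_div_right_comm] using hE x (by simpa using hx)
  have hmoment := iteratedDeriv_eq_factorial_mul_of_hasSum hsec
  simp only [iteratedDeriv_one_div_cos_zero] at hmoment
  refine ⟨fun n => ?_, fun n => ?_⟩
  · simp only [hmoment, even_two_mul, if_true, Nat.mul_div_cancel_left n two_pos]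
    field_simp
  · simp [hmoment]
end

section
/- The number of diagonal pair partitions of [2n] ⊔ [2̄n] equals the Euler number E_{2n}: #P₂^⊗(2n) = E_{2n}. Equivalently, the number of pairs (π, σ) of pair partitions of {1,...,2n} such that, when the blocks of each are ordered by their minimal elements, the i-th block of π and the i-th block of σ have the same minimum for every i, equals E_{2n}. -/
/-!
Scan `0, 1, …, 2n - 1` from left to right, keeping track of the `h` points opened so far whose
partners have not been scanned yet. A point is an opener in both matchings or a closer in both,
and a closer is matched, in each matching independently, to one of the `h` open points. So the
number of diagonal pairs is `pathWeight (2n) 0`, the total weight of the up/down paths from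
height `0` to height `0` in which a down step from height `h` weighs `h²`. The functions
`h! tanʰ x sec x` obey the same recursion under differentiation, so `pathWeight m 0` is the
`m`-th derivative of `sec` at `0`, which is `E_{2n}` for `m = 2n`.
-/

open Equiv Equiv.Perm Function Filter Topology Nat Real

namespace DiagonalPairPartition

section RemovePair

variable {X : Type*} {a b : X}

lemma apply_ne_and_ne_iff {F : Perm X} (hF : Involutive F) (hab : F a = b) (x : X) :
    (F x ≠ a ∧ F x ≠ b) ↔ (x ≠ a ∧ x ≠ b) := by
  rw [Ne, Ne, hF.eq_iff, hF.eq_iff, ← hab, hF a]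
  exact and_comm

def restrictCompl (F : Perm X) (hF : Involutive F) (hab : F a = b) :
    Perm {x // x ≠ a ∧ x ≠ b} :=
  F.subtypePerm (apply_ne_and_ne_iff hF hab)

@[simp]
lemma coe_restrictCompl_apply {F : Perm X} (hF : Involutive F) (hab : F a = b)
    (x : {x // x ≠ a ∧ x ≠ b}) : (restrictCompl F hF hab x : X) = F x :=
  rfl

lemma involutive_restrictCompl {F : Perm X} (hF : Involutive F) (hab : F a = b) :
    Involutive (restrictCompl F hF hab) :=
  fun x => Subtype.ext (hF x)

variable [DecidableEq X]

def extendCompl (a b : X) (F : Perm {x // x ≠ a ∧ x ≠ b}) : Perm X :=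
  swap a b * ofSubtype F

variable (F : Perm {x // x ≠ a ∧ x ≠ b})

@[simp]
lemma extendCompl_apply_left : extendCompl a b F a = b := by
  simp [extendCompl, ofSubtype_apply_of_not_mem F (a := a) (by simp)]

@[simp]
lemma extendCompl_apply_right : extendCompl a b F b = a := by
  simp [extendCompl, ofSubtype_apply_of_not_mem F (a := b) (by simp)]

@[simp]
lemma extendCompl_apply_coe (x : {x // x ≠ a ∧ x ≠ b}) : extendCompl a b F x = F x := by
  simp [extendCompl, ofSubtype_apply_coe, swap_apply_of_ne_of_ne (F x).2.1 (F x).2.2]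

lemma involutive_extendCompl (hF : Involutive F) :
    Involutive (extendCompl a b F) := by
  intro x
  by_cases hxa : x = a
  · subst hxa; simp
  by_cases hxb : x = b
  · subst hxb; simp
  lift x to {x // x ≠ a ∧ x ≠ b} using ⟨hxa, hxb⟩
  rw [extendCompl_apply_coe, extendCompl_apply_coe, hF]

lemma restrictCompl_extendCompl (hF : Involutive F) :
    restrictCompl (extendCompl a b F) (involutive_extendCompl F hF)
      (extendCompl_apply_left F) = F :=
  Equiv.ext fun x => Subtype.ext (extendCompl_apply_coe F x)

lemma extendCompl_restrictCompl {F : Perm X} (hF : Involutive F) (hab : F a = b) :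
    extendCompl a b (restrictCompl F hF hab) = F := by
  have hba : F b = a := by rw [← hab, hF]
  ext x
  by_cases hxa : x = a
  · subst hxa; simp [hab]
  by_cases hxb : x = b
  · subst hxb; simp [hba]
  exact extendCompl_apply_coe _ ⟨x, hxa, hxb⟩

end RemovePair

section PendingMatching

variable {X : Type*} {m : ℕ}

/-- The points still to be scanned are `ι 0 < ι 1 < ⋯`; every other point of `X` is open, with
its partner among them. -/
structure IsPendingMatching (ι : Fin m ↪ X) (F : Perm X) : Prop where
  involutive : Involutive F
  apply_ne : ∀ x, F x ≠ x
  apply_mem_range : ∀ x ∉ Set.range ι, F x ∈ Set.range ι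

def IsOpener (ι : Fin m ↪ X) (F : Perm X) (j : Fin m) : Prop :=
  ∃ k, j < k ∧ F (ι j) = ι k

variable {ι : Fin (m + 1) ↪ X} {F : Perm X}

lemma isOpener_succ_iff (j : Fin m) :
    IsOpener ι F j.succ ↔ IsOpener ((Fin.succEmb m).trans ι) F j := by
  constructor
  · rintro ⟨k, hjk, hk⟩
    cases k using Fin.cases with
    | zero => exact absurd hjk (Fin.not_lt_zero _)
    | succ k => exact ⟨k, Fin.succ_lt_succ_iff.mp hjk, hk⟩
  · rintro ⟨k, hjk, hk⟩
    exact ⟨k.succ, Fin.succ_lt_succ_iff.mpr hjk, hk⟩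

lemma apply_zero_mem_range_iff (hF : IsPendingMatching ι F) :
    F (ι 0) ∈ Set.range ι ↔ IsOpener ι F 0 := by
  constructor
  · rintro ⟨k, hk⟩
    refine ⟨k, Fin.pos_iff_ne_zero.mpr ?_, hk.symm⟩
    rintro rfl
    exact hF.apply_ne _ hk.symm
  · rintro ⟨k, -, hk⟩
    exact ⟨k, hk.symm⟩

lemma mem_range_succEmb_trans_iff {x : X} :
    x ∈ Set.range ((Fin.succEmb m).trans ι) ↔ x ∈ Set.range ι ∧ x ≠ ι 0 := by
  constructor
  · rintro ⟨k, rfl⟩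
    exact ⟨⟨_, rfl⟩, ι.injective.ne (Fin.succ_ne_zero k)⟩
  · rintro ⟨⟨k, rfl⟩, hk⟩
    cases k using Fin.cases with
    | zero => exact absurd rfl hk
    | succ k => exact ⟨k, rfl⟩

lemma isPendingMatching_succEmb_trans_iff :
    IsPendingMatching ((Fin.succEmb m).trans ι) F ↔ IsPendingMatching ι F ∧ IsOpener ι F 0 := by
  constructor
  · intro hF
    have hι0 : ι 0 ∉ Set.range ((Fin.succEmb m).trans ι) := fun h =>
      (mem_range_succEmb_trans_iff.mp h).2 rfl
    have hF' : IsPendingMatching ι F :=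
      ⟨hF.involutive, hF.apply_ne, fun x hx => (mem_range_succEmb_trans_iff.mp
        (hF.apply_mem_range x fun h => hx (mem_range_succEmb_trans_iff.mp h).1)).1⟩
    exact ⟨hF', (apply_zero_mem_range_iff hF').mp
      (mem_range_succEmb_trans_iff.mp (hF.apply_mem_range _ hι0)).1⟩
  · rintro ⟨hF, hF0⟩
    refine ⟨hF.involutive, hF.apply_ne, fun x hx => mem_range_succEmb_trans_iff.mpr ?_⟩
    by_cases hx0 : x = ι 0
    · subst hx0
      exact ⟨(apply_zero_mem_range_iff hF).mpr hF0, hF.apply_ne _⟩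
    · have hxι : x ∉ Set.range ι := fun h => hx (mem_range_succEmb_trans_iff.mpr ⟨h, hx0⟩)
      refine ⟨hF.apply_mem_range x hxι, fun h => hxι ?_⟩
      rw [hF.involutive.eq_iff] at h
      exact h ▸ (apply_zero_mem_range_iff hF).mpr hF0

lemma not_isOpener_zero {p : X} (hp : p ∉ Set.range ι) (h0 : F (ι 0) = p) : ¬ IsOpener ι F 0 :=
  fun ⟨k, _, hk⟩ => hp ⟨k, hk ▸ h0⟩

/-- What remains of the window `ι` once `ι 0` has been closed with the open point `p` and both
points have been deleted. -/
def succRestrict (ι : Fin (m + 1) ↪ X) {p : X} (hp : p ∉ Set.range ι) :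
    Fin m ↪ {x // x ≠ ι 0 ∧ x ≠ p} where
  toFun j := ⟨ι j.succ, ι.injective.ne (Fin.succ_ne_zero j), fun h => hp ⟨_, h⟩⟩
  inj' _ _ h := Fin.succ_injective _ (ι.injective (congrArg Subtype.val h))

variable {p : X} (hp : p ∉ Set.range ι)

lemma mem_range_succRestrict_iff (x : {x // x ≠ ι 0 ∧ x ≠ p}) :
    x ∈ Set.range (succRestrict ι hp) ↔ (x : X) ∈ Set.range ι := by
  refine ⟨fun ⟨j, hj⟩ => ⟨j.succ, congrArg Subtype.val hj⟩, fun hx => ?_⟩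
  obtain ⟨j, hj⟩ := mem_range_succEmb_trans_iff.mpr ⟨hx, x.2.1⟩
  exact ⟨j, Subtype.ext hj⟩

variable {F : Perm X} (hF : Involutive F) (h0 : F (ι 0) = p)

lemma isOpener_restrictCompl_iff (j : Fin m) :
    IsOpener (succRestrict ι hp) (restrictCompl F hF h0) j ↔ IsOpener ι F j.succ := by
  rw [isOpener_succ_iff]
  simp only [IsOpener, Subtype.ext_iff, coe_restrictCompl_apply]
  rfl

lemma isPendingMatching_restrictCompl_iff :
    IsPendingMatching (succRestrict ι hp) (restrictCompl F hF h0) ↔ IsPendingMatching ι F := by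
  have hp0 : p ≠ ι 0 := fun h => hp ⟨0, h.symm⟩
  have hFp : F p = ι 0 := by rw [← h0, hF]
  constructor
  · intro hF'
    refine ⟨hF, fun x hx => ?_, fun x hx => ?_⟩
    · by_cases hx0 : x = ι 0
      · subst hx0; exact hp0 (h0 ▸ hx)
      by_cases hxp : x = p
      · subst hxp; exact hp0 (hFp ▸ hx).symm
      exact hF'.apply_ne ⟨x, hx0, hxp⟩ (Subtype.ext hx)
    · by_cases hxp : x = p
      · subst hxp; exact hFp ▸ ⟨0, rfl⟩
      have hx0 : x ≠ ι 0 := fun h => hx ⟨0, h.symm⟩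
      exact (mem_range_succRestrict_iff hp _).mp (hF'.apply_mem_range ⟨x, hx0, hxp⟩
        fun h => hx ((mem_range_succRestrict_iff hp _).mp h))
  · intro hF'
    refine ⟨involutive_restrictCompl hF h0, fun x hx => hF'.apply_ne x (congrArg Subtype.val hx),
      fun x hx => (mem_range_succRestrict_iff hp _).mpr ?_⟩
    exact hF'.apply_mem_range x fun h => hx ((mem_range_succRestrict_iff hp _).mpr h)

lemma isPendingMatching_extendCompl [DecidableEq X] {F : Perm {x // x ≠ ι 0 ∧ x ≠ p}}
    (hF : IsPendingMatching (succRestrict ι hp) F) :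
    IsPendingMatching ι (extendCompl _ _ F) := by
  have h := isPendingMatching_restrictCompl_iff hp (involutive_extendCompl F hF.involutive)
    (extendCompl_apply_left F)
  rw [restrictCompl_extendCompl _ hF.involutive] at h
  exact h.mp hF

lemma isOpener_extendCompl_succ_iff [DecidableEq X] {F : Perm {x // x ≠ ι 0 ∧ x ≠ p}}
    (hF : Involutive F) (j : Fin m) :
    IsOpener ι (extendCompl _ _ F) j.succ ↔ IsOpener (succRestrict ι hp) F j := by
  have h := isOpener_restrictCompl_iff hp (involutive_extendCompl F hF)
    (extendCompl_apply_left F) j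
  rw [restrictCompl_extendCompl _ hF] at h
  exact h.symm

end PendingMatching

section DiagonalPairs

variable {X Y : Type*} {m : ℕ}

abbrev DiagonalPairs (ι : Fin m ↪ X) (κ : Fin m ↪ Y) : Type _ :=
  {FG : Perm X × Perm Y // IsPendingMatching ι FG.1 ∧ IsPendingMatching κ FG.2 ∧
    ∀ j, IsOpener ι FG.1 j ↔ IsOpener κ FG.2 j}

variable {ι : Fin (m + 1) ↪ X} {κ : Fin (m + 1) ↪ Y}

def openerEquiv : {x : DiagonalPairs ι κ // IsOpener ι x.1.1 0} ≃
    DiagonalPairs ((Fin.succEmb m).trans ι) ((Fin.succEmb m).trans κ) :=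
  (Equiv.subtypeSubtypeEquivSubtypeInter _ fun FG : Perm X × Perm Y => IsOpener ι FG.1 0).trans
    (Equiv.subtypeEquivRight fun FG => by
      simp only [isPendingMatching_succEmb_trans_iff, ← isOpener_succ_iff, Fin.forall_fin_succ]
      tauto)

def closerEquiv : {x : DiagonalPairs ι κ // ¬ IsOpener ι x.1.1 0} ≃
    Σ pq : {x // x ∉ Set.range ι} × {y // y ∉ Set.range κ},
      {x : DiagonalPairs ι κ // x.1.1 (ι 0) = pq.1 ∧ x.1.2 (κ 0) = pq.2} where
  toFun x := ⟨(⟨_, (apply_zero_mem_range_iff x.1.2.1).not.mpr x.2⟩,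
    ⟨_, (apply_zero_mem_range_iff x.1.2.2.1).not.mpr fun h => x.2 ((x.1.2.2.2 0).mpr h)⟩),
    x.1, rfl, rfl⟩
  invFun x := ⟨x.2.1, not_isOpener_zero x.1.1.2 x.2.2.1⟩
  left_inv _ := rfl
  right_inv x := Sigma.subtype_ext (Prod.ext (Subtype.ext x.2.2.1) (Subtype.ext x.2.2.2)) rfl

variable [DecidableEq X] [DecidableEq Y] {p : X} {q : Y} (hp : p ∉ Set.range ι)
  (hq : q ∉ Set.range κ)

def closerFiberEquiv : {x : DiagonalPairs ι κ // x.1.1 (ι 0) = p ∧ x.1.2 (κ 0) = q} ≃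
    DiagonalPairs (succRestrict ι hp) (succRestrict κ hq) where
  toFun x := ⟨(restrictCompl _ x.1.2.1.involutive x.2.1,
      restrictCompl _ x.1.2.2.1.involutive x.2.2),
    (isPendingMatching_restrictCompl_iff hp x.1.2.1.involutive x.2.1).mpr x.1.2.1,
    (isPendingMatching_restrictCompl_iff hq x.1.2.2.1.involutive x.2.2).mpr x.1.2.2.1,
    fun j => by
      rw [isOpener_restrictCompl_iff, isOpener_restrictCompl_iff]
      exact x.1.2.2.2 j.succ⟩
  invFun y := ⟨⟨(extendCompl _ _ y.1.1, extendCompl _ _ y.1.2),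
      isPendingMatching_extendCompl hp y.2.1, isPendingMatching_extendCompl hq y.2.2.1,
      Fin.forall_fin_succ.mpr ⟨iff_of_false (not_isOpener_zero hp (extendCompl_apply_left _))
        (not_isOpener_zero hq (extendCompl_apply_left _)), fun j => by
          rw [isOpener_extendCompl_succ_iff hp y.2.1.involutive,
            isOpener_extendCompl_succ_iff hq y.2.2.1.involutive]
          exact y.2.2.2 j⟩⟩,
    extendCompl_apply_left _, extendCompl_apply_left _⟩
  left_inv x := Subtype.ext <| Subtype.ext <| Prod.ext
    (extendCompl_restrictCompl x.1.2.1.involutive x.2.1)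
    (extendCompl_restrictCompl x.1.2.2.1.involutive x.2.2)
  right_inv y := Subtype.ext <| Prod.ext
    (restrictCompl_extendCompl _ y.2.1.involutive) (restrictCompl_extendCompl _ y.2.2.1.involutive)

open Classical in
noncomputable def diagonalPairsSuccEquiv : DiagonalPairs ι κ ≃
    DiagonalPairs ((Fin.succEmb m).trans ι) ((Fin.succEmb m).trans κ) ⊕
      Σ pq : {x // x ∉ Set.range ι} × {y // y ∉ Set.range κ},
        DiagonalPairs (succRestrict ι pq.1.2) (succRestrict κ pq.2.2) :=
  (Equiv.sumCompl _).symm.trans <| Equiv.sumCongr openerEquiv <|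
    closerEquiv.trans <| Equiv.sigmaCongrRight fun pq => closerFiberEquiv pq.1.2 pq.2.2

end DiagonalPairs

def pathWeight : ℕ → ℕ → ℕ
  | 0, h => if h = 0 then 1 else 0
  | m + 1, h => pathWeight m (h + 1) + h * h * pathWeight m (h - 1)

section Counting

variable {X Y : Type*} [Finite X] [Finite Y] {m : ℕ}

lemma card_compl_range (ι : Fin m ↪ X) : Nat.card {x // x ∉ Set.range ι} = Nat.card X - m := by
  have h := Nat.card_coe_set_eq (Set.range ι)ᶜ
  rwa [Set.ncard_compl, Set.ncard_range_of_injective ι.injective, Nat.card_fin] at h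

lemma card_ne_and_ne {a b : X} (hab : a ≠ b) : Nat.card {x // x ≠ a ∧ x ≠ b} = Nat.card X - 2 := by
  rw [← Set.ncard_pair hab, ← Set.ncard_compl, ← Nat.card_coe_set_eq]
  exact Nat.card_congr (Equiv.subtypeEquivRight fun x => by simp)

lemma card_diagonalPairs_zero {h : ℕ} (ι : Fin 0 ↪ X) (κ : Fin 0 ↪ Y) (hX : Nat.card X = h)
    (hY : Nat.card Y = h) : Nat.card (DiagonalPairs ι κ) = pathWeight 0 h := by
  rcases Nat.eq_zero_or_pos h with rfl | hh
  · have := Finite.card_eq_zero_iff.mp hX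
    have := Finite.card_eq_zero_iff.mp hY
    refine Nat.card_eq_one_iff_unique.mpr ⟨⟨fun _ _ => Subtype.ext (Prod.ext
      (Equiv.ext isEmptyElim) (Equiv.ext isEmptyElim))⟩, ⟨⟨(1, 1), ?_⟩⟩⟩
    exact ⟨⟨fun x => isEmptyElim x, isEmptyElim, isEmptyElim⟩,
      ⟨fun x => isEmptyElim x, isEmptyElim, isEmptyElim⟩, fun j => j.elim0⟩
  · have : Nonempty X := (Nat.card_pos_iff.mp (hX ▸ hh)).1
    have : IsEmpty (DiagonalPairs ι κ) := ⟨fun x => by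
      obtain ⟨j, -⟩ := x.2.1.apply_mem_range (Classical.arbitrary X) fun ⟨j, _⟩ => j.elim0
      exact j.elim0⟩
    simp [pathWeight, hh.ne']

theorem card_diagonalPairs {h : ℕ} (ι : Fin m ↪ X) (κ : Fin m ↪ Y) (hX : Nat.card X = h + m)
    (hY : Nat.card Y = h + m) : Nat.card (DiagonalPairs ι κ) = pathWeight m h := by
  induction m generalizing X Y h with
  | zero => exact card_diagonalPairs_zero ι κ hX hY
  | succ m ih =>
    classical
    have : Fintype X := Fintype.ofFinite X
    have : Fintype Y := Fintype.ofFinite Y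
    have hfiber (pq : {x // x ∉ Set.range ι} × {y // y ∉ Set.range κ}) :
        Nat.card (DiagonalPairs (succRestrict ι pq.1.2) (succRestrict κ pq.2.2)) =
          pathWeight m (h - 1) := by
      have hh : 0 < h := by
        have : Nonempty {x // x ∉ Set.range ι} := ⟨pq.1⟩
        have := Nat.card_pos (α := {x // x ∉ Set.range ι})
        rw [card_compl_range] at this
        omega
      have hι0 : ι 0 ≠ pq.1 := fun e => pq.1.2 ⟨0, e⟩
      have hκ0 : κ 0 ≠ pq.2 := fun e => pq.2.2 ⟨0, e⟩
      exact ih _ _ (by rw [card_ne_and_ne hι0]; omega) (by rw [card_ne_and_ne hκ0]; omega)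
    rw [Nat.card_congr diagonalPairsSuccEquiv, Nat.card_sum, Nat.card_sigma,
      ih _ _ (h := h + 1) (by omega) (by omega), Finset.sum_congr rfl fun pq _ => hfiber pq,
      Finset.sum_const, Finset.card_univ, ← Nat.card_eq_fintype_card, Nat.card_prod,
      card_compl_range, card_compl_range, hX, hY, pathWeight, smul_eq_mul]
    simp

end Counting

/-- `h! tanʰ x sec x`. -/
noncomputable def secTerm (h : ℕ) (x : ℝ) : ℝ := h ! * sin x ^ h / cos x ^ (h + 1)

lemma contDiffAt_secTerm (h : ℕ) {x : ℝ} (hx : cos x ≠ 0) (n : ℕ) :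
    ContDiffAt ℝ n (secTerm h) x := by
  unfold secTerm
  fun_prop (disch := exact pow_ne_zero _ hx)

lemma hasDerivAt_secTerm (h : ℕ) {x : ℝ} (hx : cos x ≠ 0) :
    HasDerivAt (secTerm h) (secTerm (h + 1) x + h * h * secTerm (h - 1) x) x := by
  have hnum := ((hasDerivAt_sin x).fun_pow h).const_mul (h ! : ℝ)
  have hden := (hasDerivAt_cos x).fun_pow (h + 1)
  refine (hnum.div hden (pow_ne_zero _ hx)).congr_deriv ?_
  rcases h with _ | h
  · simp [secTerm]
  · simp only [secTerm, factorial_succ, add_tsub_cancel_right]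
    push_cast
    field_simp
    ring

lemma iteratedDeriv_secTerm_zero (m h : ℕ) : iteratedDeriv m (secTerm h) 0 = pathWeight m h := by
  induction m generalizing h with
  | zero => rcases h with _ | h <;> simp [secTerm, pathWeight]
  | succ m ih =>
    have hcos : cos 0 ≠ 0 := by simp
    have hderiv : deriv (secTerm h) =ᶠ[𝓝 0]
        fun x => secTerm (h + 1) x + (h * h : ℝ) * secTerm (h - 1) x := by
      filter_upwards [continuous_cos.continuousAt.eventually_ne hcos] with x hx
      exact (hasDerivAt_secTerm h hx).deriv
    rw [iteratedDeriv_succ', (hderiv.iteratedDeriv m).eq_of_nhds,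
      iteratedDeriv_fun_add (contDiffAt_secTerm _ hcos m)
        (contDiffAt_const.mul (contDiffAt_secTerm _ hcos m)),
      iteratedDeriv_const_mul_field, ih, ih, pathWeight]
    push_cast
    ring

lemma coeff_eq_iteratedDeriv_div_factorial {f : ℝ → ℝ} {c : ℕ → ℝ} {r : ℝ} (hr : 0 < r)
    (hf : ∀ x, |x| < r → HasSum (fun n => c n * x ^ n) (f x)) (n : ℕ) :
    c n = iteratedDeriv n f 0 / n ! := by
  set p := FormalMultilinearSeries.ofScalars ℝ c
  have hp : HasFPowerSeriesOnBall f p 0 (ENNReal.ofReal (r / 2)) := by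
    refine ⟨p.le_radius_of_tendsto (r := (r / 2).toNNReal) (l := 0) ?_, by simpa using hr,
      fun {y} hy => ?_⟩
    · have hr2 : |r / 2| < r := by rw [abs_of_pos (half_pos hr)]; linarith
      simpa [p, FormalMultilinearSeries.ofScalars_norm, abs_of_pos hr, (half_pos hr).le] using
        (hf _ hr2).summable.tendsto_atTop_zero.norm
    · have hy : |y| < r := by linarith [(by simpa using hy : |y| < r / 2)]
      simpa [p, FormalMultilinearSeries.ofScalars_apply_eq, mul_comm] using hf y hy
  have := hp.hasFPowerSeriesAt.eq_formalMultilinearSeries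
    hp.hasFPowerSeriesAt.analyticAt.hasFPowerSeriesAt
  exact congrFun (FormalMultilinearSeries.ofScalars_series_injective (𝕜 := ℝ) (E := ℝ) this) n

lemma secTerm_zero : secTerm 0 = fun x => 1 / cos x := by
  funext x; simp [secTerm]

lemma eq_iteratedDeriv_of_hasSum_even {f : ℝ → ℝ} {a : ℕ → ℝ} {r : ℝ} (hr : 0 < r)
    (hf : ∀ x, |x| < r → HasSum (fun n => a n * x ^ (2 * n) / (2 * n) !) (f x)) (n : ℕ) :
    a n = iteratedDeriv (2 * n) f 0 := by
  set c : ℕ → ℝ := fun k => if Even k then a (k / 2) / k ! else 0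
  have hc (x : ℝ) (hx : |x| < r) : HasSum (fun k => c k * x ^ k) (f x) := by
    refine (Function.Injective.hasSum_iff (mul_right_injective₀ two_ne_zero) fun k hk => ?_).mp ?_
    · have : ¬ Even k := fun ⟨j, hj⟩ => hk ⟨j, show 2 * j = k by omega⟩
      simp [c, this]
    · convert hf x hx using 2 with j
      simp [c, div_mul_eq_mul_div]
  have := coeff_eq_iteratedDeriv_div_factorial hr hc (2 * n)
  simp only [c, even_two_mul, if_true, Nat.mul_div_cancel_left n two_pos] at this
  exact (div_left_inj' (by positivity)).mp this

section FinPairs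

variable {m : ℕ} {F : Perm (Fin m)}

lemma isPendingMatching_refl_iff :
    IsPendingMatching (Embedding.refl (Fin m)) F ↔ Involutive F ∧ ∀ x, F x ≠ x :=
  ⟨fun hF => ⟨hF.involutive, hF.apply_ne⟩,
    fun hF => ⟨hF.1, hF.2, fun x hx => absurd ⟨x, rfl⟩ hx⟩⟩

lemma isOpener_refl_iff {j : Fin m} : IsOpener (Embedding.refl (Fin m)) F j ↔ j < F j :=
  ⟨fun ⟨k, hk, e⟩ => by simp only [Embedding.refl_apply] at e; exact e ▸ hk,
    fun h => ⟨F j, h, rfl⟩⟩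

theorem card_fin_diagonalPairs (N : ℕ) :
    Nat.card {p : Perm (Fin N) × Perm (Fin N) //
      (∀ a, p.1 (p.1 a) = a) ∧ (∀ a, p.1 a ≠ a) ∧ (∀ a, p.2 (p.2 a) = a) ∧ (∀ a, p.2 a ≠ a) ∧
        (∀ a, a < p.1 a ↔ a < p.2 a)} = pathWeight N 0 := by
  rw [← card_diagonalPairs (Embedding.refl _) (Embedding.refl _) (by simp) (by simp)]
  refine Nat.card_congr (Equiv.subtypeEquivRight fun p => ?_)
  simp only [isPendingMatching_refl_iff, isOpener_refl_iff, Involutive]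
  tauto

end FinPairs

end DiagonalPairPartition

/-- The number of diagonal pair partitions of `[2n] ⊔ [2̄n]` equals the Euler number
`E_{2n}` (defined by `sec x = ∑ E_{2n} x^{2n}/(2n)!`).  A diagonal pair partition is
encoded as a pair `(f, g)` of fixed-point-free involutions of `Fin (2n)` (each pair
partition being the orbit partition of such an involution) such that `a` is the
smaller element of its pair in `f` if and only if `a` is the smaller element of its
pair in `g`, i.e. the blocks of the two pair partitions, ordered by their minimal
elements, have the same minima. -/
theorem card_diagonal_pair_partitions_eq_euler (E : ℕ → ℝ)
    (hE : ∀ x : ℝ, |x| < π / 2 →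
      HasSum (fun n : ℕ => E n * x ^ (2 * n) / ((2 * n).factorial : ℝ)) (1 / Real.cos x))
    (n : ℕ) :
    (Nat.card {p : Equiv.Perm (Fin (2 * n)) × Equiv.Perm (Fin (2 * n)) //
        (∀ a, p.1 (p.1 a) = a) ∧ (∀ a, p.1 a ≠ a) ∧
        (∀ a, p.2 (p.2 a) = a) ∧ (∀ a, p.2 a ≠ a) ∧
        (∀ a, a < p.1 a ↔ a < p.2 a)} : ℝ) = E n := by
  rw [DiagonalPairPartition.card_fin_diagonalPairs,
    DiagonalPairPartition.eq_iteratedDeriv_of_hasSum_even (half_pos pi_pos) hE,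
    ← DiagonalPairPartition.secTerm_zero, DiagonalPairPartition.iteratedDeriv_secTerm_zero]
end

section
/- Let a_{q,t} and a*_{q,t} be the (q,t)-annihilation and creation operators on the (q,t)-Fock space over a Hilbert space H. Then for all ξ, η ∈ H they satisfy the commutation relation a_{q,t}(ξ)·a*_{q,t}(η) − q·a*_{q,t}(η)·a_{q,t}(ξ) = ⟨ξ,η⟩·t^N, where t^N acts on an n-particle vector by multiplication by t^n. -/
open scoped RealInnerProductSpace

noncomputable section

variable {H : Type*} [NormedAddCommGroup H] [InnerProductSpace ℝ H]

/-- The algebraic full Fock space, modelled as the free module on finite sequences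
(`n`-particle elementary tensors) of vectors of `H`. -/
abbrev FockModel (H : Type*) := List H →₀ ℝ

/-- The creation operator `a*_{q,t}(ξ)` (independent of `q, t`). -/
def creOp (ξ : H) : FockModel H →ₗ[ℝ] FockModel H :=
  Finsupp.lmapDomain ℝ ℝ (fun l => ξ :: l)

/-- The `(q,t)`-annihilation operator:
`a_{q,t}(ξ)(η_1 ⊗ ⋯ ⊗ η_n) = ∑_{i=1}^n q^{i-1} t^{n-i} ⟨ξ, η_i⟩ η_1 ⊗ ⋯ η̂_i ⋯ ⊗ η_n`. -/
def annOp (q t : ℝ) (ξ : H) : FockModel H →ₗ[ℝ] FockModel H :=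
  Finsupp.linearCombination ℝ (fun l : List H =>
    ∑ i ∈ Finset.range l.length,
      (q ^ i * t ^ (l.length - 1 - i) * ⟪ξ, l.getD i 0⟫) • Finsupp.single (l.eraseIdx i) (1 : ℝ))

/-- The operator `t^N`, acting on an `n`-particle tensor as multiplication by `t^n`. -/
def tPowN (t : ℝ) : FockModel H →ₗ[ℝ] FockModel H :=
  Finsupp.linearCombination ℝ (fun l : List H => (t ^ l.length) • Finsupp.single l (1 : ℝ))

/-- The `(q,t)`-commutation relation
`a_{q,t}(ξ) a*_{q,t}(η) − q a*_{q,t}(η) a_{q,t}(ξ) = ⟨ξ, η⟩ t^N`. -/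
theorem qt_commutation_relation (q t : ℝ) (ξ η : H) :
    (annOp q t ξ) ∘ₗ (creOp η) - q • ((creOp η) ∘ₗ (annOp q t ξ)) =
      ⟪ξ, η⟫ • (tPowN t : FockModel H →ₗ[ℝ] FockModel H) := by
  refine Finsupp.lhom_ext fun l b => ?_
  simp only [LinearMap.coe_comp, Function.comp_apply, LinearMap.sub_apply, LinearMap.smul_apply,
    LinearMap.comp_apply, creOp, annOp, tPowN, Finsupp.lmapDomain_apply, Finsupp.mapDomain_single,
    Finsupp.linearCombination_single, Finsupp.mapDomain_smul, one_smul]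
  rw [List.length_cons, Finset.sum_range_succ']
  simp only [List.getD_cons_succ, List.getD_cons_zero, List.eraseIdx_cons_succ,
    List.eraseIdx_cons_zero, pow_zero, one_mul, Nat.add_sub_cancel, Nat.succ_sub_one,
    Finsupp.mapDomain_finset_sum, Finsupp.mapDomain_smul, Finsupp.mapDomain_single,
    Finset.smul_sum, smul_smul]
  simp only [Nat.sub_zero, Nat.sub_sub, smul_add, Finset.smul_sum, smul_smul]
  simp only [mul_comm, mul_left_comm, mul_assoc]
  have key : ∀ x : ℕ, (b * (⟪ξ, l.getD x 0⟫ * (q ^ (x+1) * t ^ (l.length - (x+1))))) =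
      q * (b * (q ^ x * (⟪ξ, l.getD x 0⟫ * t ^ (l.length - (1+x))))) := fun x => by
    rw [Nat.add_comm 1 x]; ring
  simp only [key]
  rw [add_sub_cancel_left]

end
end

section
/- Let G be the (q,t,v,w)-Gaussian operator A + A* acting on the one-dimensional quadrabasic Fock space spanned by vectors e_n := ξ^{⊗n} ⊗_S η^{⊗n} with ‖ξ‖ = ‖η‖ = 1. Then G·e_n = e_{n+1} + [n]_{q,t}[n]_{v,w}·e_{n-1}, and therefore ⟨e_0, G^n e_0⟩ equals the n-th moment of the measure orthogonalizing the polynomials Q_n^{(q,t,v,w)} defined by x·Q_n = Q_{n+1} + [n]_{q,t}[n]_{v,w}·Q_{n-1}. -/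
open MeasureTheory Polynomial
open scoped RealInnerProductSpace

/-- The `(q,t)`-number. -/
noncomputable def qtNum (q t : ℝ) (n : ℕ) : ℝ :=
  ∑ k ∈ Finset.range n, q ^ k * t ^ (n - 1 - k)

/-- The quadrabasic Hermite polynomials `Q_n^{(q,t,v,w)}`:
`x·Q_n = Q_{n+1} + [n]_{q,t}[n]_{v,w}·Q_{n-1}`, `Q_{-1} = 0`, `Q_0 = 1`. -/
noncomputable def qtQ (q t v w : ℝ) : ℕ → Polynomial ℝ
  | 0 => 1
  | 1 => X
  | (n + 2) => X * qtQ q t v w (n + 1)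
      - C (qtNum q t (n + 1) * qtNum v w (n + 1)) * qtQ q t v w n

noncomputable def qtA (q t v w : ℝ) : ℕ → ℕ → ℝ
  | 0, 0 => 1
  | 0, _ + 1 => 0
  | n + 1, 0 => qtNum q t 1 * qtNum v w 1 * qtA q t v w n 1
  | n + 1, k + 1 => qtA q t v w n k
      + qtNum q t (k + 2) * qtNum v w (k + 2) * qtA q t v w n (k + 2)

lemma qtNum_zero (q t : ℝ) : qtNum q t 0 = 0 := by simp [qtNum]

lemma qtA_eq_zero (q t v w : ℝ) : ∀ n k : ℕ, n < k → qtA q t v w n k = 0 := by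
  intro n
  induction n with
  | zero => intro k hk; match k, hk with
    | k + 1, _ => rfl
  | succ n ih =>
    intro k hk
    match k, hk with
    | k + 1, hk =>
      have h1 : qtA q t v w n k = 0 := ih k (by omega)
      have h2 : qtA q t v w n (k + 2) = 0 := ih (k + 2) (by omega)
      show qtA q t v w n k + _ * _ * qtA q t v w n (k + 2) = 0
      rw [h1, h2]; ring

/-- Generic expansion of `T^n f₀` for a tridiagonal action. -/
lemma qtA_expansion (q t v w : ℝ) {M : Type*} [AddCommGroup M] [Module ℝ M]
    (f : ℕ → M) (T : Module.End ℝ M)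
    (hT : ∀ k : ℕ, T (f k) = f (k + 1) + (qtNum q t k * qtNum v w k) • f (k - 1)) :
    ∀ n : ℕ, (T ^ n) (f 0) =
      ∑ k ∈ Finset.range (n + 1), qtA q t v w n k • f k := by
  intro n
  induction n with
  | zero => simp [qtA]
  | succ n ih =>
    have step : (T ^ (n + 1)) (f 0) = T ((T ^ n) (f 0)) := by
      rw [pow_succ', Module.End.mul_apply]
    rw [step, ih, map_sum]
    have hTk : ∀ k ∈ Finset.range (n + 1),
        T (qtA q t v w n k • f k) =
          qtA q t v w n k • f (k + 1)
          + (qtA q t v w n k * (qtNum q t k * qtNum v w k)) • f (k - 1) := by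
      intro k _
      rw [_root_.map_smul, hT k, smul_add, smul_smul]
    rw [Finset.sum_congr rfl hTk, Finset.sum_add_distrib]
    -- name c
    set c : ℕ → ℝ := fun k => qtNum q t k * qtNum v w k with hc
    -- second sum on LHS
    have hL2 : (∑ k ∈ Finset.range (n + 1),
        (qtA q t v w n k * c k) • f (k - 1))
        = ∑ k ∈ Finset.range (n + 2), (c (k + 1) * qtA q t v w n (k + 1)) • f k := by
      rw [Finset.sum_range_succ' (fun k => (qtA q t v w n k * c k) • f (k - 1)) n]
      simp only [Nat.add_sub_cancel, Nat.zero_sub]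
      have hc0 : c 0 = 0 := by simp [hc, qtNum_zero]
      rw [hc0, mul_zero, zero_smul, add_zero]
      rw [Finset.sum_range_succ (fun k => (c (k + 1) * qtA q t v w n (k + 1)) • f k) (n+1),
          Finset.sum_range_succ (fun k => (c (k + 1) * qtA q t v w n (k + 1)) • f k) n]
      rw [qtA_eq_zero q t v w n (n + 1) (by omega), qtA_eq_zero q t v w n (n + 2) (by omega)]
      simp [mul_comm]
    rw [hL2]
    -- RHS
    rw [Finset.sum_range_succ' (fun k => qtA q t v w (n + 1) k • f k) (n + 1)]
    have hA0 : qtA q t v w (n + 1) 0 = c 1 * qtA q t v w n 1 := rfl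
    have hAs : ∀ k, qtA q t v w (n + 1) (k + 1)
        = qtA q t v w n k + c (k + 2) * qtA q t v w n (k + 2) := fun k => rfl
    simp only [hA0, hAs, add_smul]
    rw [Finset.sum_add_distrib]
    rw [Finset.sum_range_succ' (fun k => (c (k + 1) * qtA q t v w n (k + 1)) • f k) (n + 1)]
    abel

/-- Abstract model of the one-dimensional quadrabasic Fock space: a family of
orthogonal vectors `e_n = ξ^{⊗n} ⊗_S η^{⊗n}` with `‖e_n‖² = ∏_{i=1}^n [i]_{q,t}[i]_{v,w}`,
on which the quadrabasic Gaussian operator `G = A + A*` acts by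
`G e_n = e_{n+1} + [n]_{q,t}[n]_{v,w} e_{n-1}`.  Then `⟨e_0, G^n e_0⟩` is the `n`-th
moment of the measure orthogonalizing the polynomials `Q_n^{(q,t,v,w)}`. -/
theorem quadrabasic_gaussian_moments (q t v w : ℝ)
    {V : Type*} [NormedAddCommGroup V] [InnerProductSpace ℝ V]
    (e : ℕ → V) (G : Module.End ℝ V)
    (he0 : ‖e 0‖ = 1)
    (horthE : ∀ i j : ℕ, i ≠ j → ⟪e i, e j⟫ = 0)
    (hnorm : ∀ n : ℕ, ‖e n‖ ^ 2 = ∏ i ∈ Finset.range n, qtNum q t (i + 1) * qtNum v w (i + 1))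
    (hG0 : G (e 0) = e 1)
    (hG : ∀ n : ℕ, G (e (n + 1)) =
      e (n + 2) + (qtNum q t (n + 1) * qtNum v w (n + 1)) • e n)
    (μ : Measure ℝ) [IsProbabilityMeasure μ]
    (hint : ∀ p : Polynomial ℝ, Integrable (fun x => p.eval x) μ)
    (horth : ∀ i j : ℕ, i ≠ j →
      ∫ x, (qtQ q t v w i).eval x * (qtQ q t v w j).eval x ∂μ = 0) :
    ∀ n : ℕ, ⟪e 0, (G ^ n) (e 0)⟫ = ∫ x, x ^ n ∂μ := by
  intro n
  -- Fock-space side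
  have hG' : ∀ k : ℕ, G (e k) = e (k + 1) + (qtNum q t k * qtNum v w k) • e (k - 1) := by
    intro k
    cases k with
    | zero => rw [hG0]; simp [qtNum_zero]
    | succ k => exact hG k
  have hFock : ⟪e 0, (G ^ n) (e 0)⟫ = qtA q t v w n 0 := by
    rw [qtA_expansion q t v w e G hG' n, inner_sum]
    rw [Finset.sum_eq_single 0]
    · rw [real_inner_smul_right, real_inner_self_eq_norm_sq, he0]
      ring
    · intro k _ hk
      rw [real_inner_smul_right, horthE 0 k (Ne.symm hk), mul_zero]
    · intro h
      exact absurd (Finset.mem_range.2 (Nat.succ_pos n)) h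
  -- Polynomial side
  have hT : ∀ k : ℕ, (LinearMap.mulLeft ℝ (X : Polynomial ℝ)) (qtQ q t v w k)
      = qtQ q t v w (k + 1) + (qtNum q t k * qtNum v w k) • qtQ q t v w (k - 1) := by
    intro k
    cases k with
    | zero => simp [LinearMap.mulLeft_apply, qtQ, qtNum_zero]
    | succ k =>
      rw [LinearMap.mulLeft_apply]
      show X * qtQ q t v w (k + 1) = qtQ q t v w (k + 2) + _
      rw [show qtQ q t v w (k + 2) = X * qtQ q t v w (k + 1)
          - C (qtNum q t (k + 1) * qtNum v w (k + 1)) * qtQ q t v w k from rfl]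
      simp only [Nat.add_sub_cancel, Polynomial.smul_eq_C_mul]
      ring
  have hpow : ∀ m : ℕ, ((LinearMap.mulLeft ℝ (X : Polynomial ℝ)) ^ m) (qtQ q t v w 0)
      = X ^ m := by
    intro m
    induction m with
    | zero => simp [qtQ]
    | succ m ih =>
      rw [pow_succ', Module.End.mul_apply, ih, LinearMap.mulLeft_apply, pow_succ, mul_comm]
  have hX : (X : Polynomial ℝ) ^ n
      = ∑ k ∈ Finset.range (n + 1), qtA q t v w n k • qtQ q t v w k := by
    rw [← hpow n]
    exact qtA_expansion q t v w (qtQ q t v w) (LinearMap.mulLeft ℝ X) hT n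
  have hQ0 : ∫ x, (qtQ q t v w 0).eval x ∂μ = 1 := by
    simp [qtQ]
  have hQk : ∀ k : ℕ, k ≠ 0 → ∫ x, (qtQ q t v w k).eval x ∂μ = 0 := by
    intro k hk
    have := horth k 0 hk
    simpa [qtQ] using this
  have hMom : ∫ x, x ^ n ∂μ = qtA q t v w n 0 := by
    have hxn : ∀ x : ℝ, x ^ n
        = ∑ k ∈ Finset.range (n + 1), qtA q t v w n k * (qtQ q t v w k).eval x := by
      intro x
      have := congrArg (Polynomial.eval x) hX
      simpa [Polynomial.eval_finset_sum] using this
    rw [integral_congr_ae (Filter.Eventually.of_forall hxn)]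
    rw [integral_finset_sum]
    · rw [Finset.sum_eq_single 0]
      · rw [integral_const_mul, hQ0, mul_one]
      · intro k _ hk
        rw [integral_const_mul, hQk k hk, mul_zero]
      · intro h
        exact absurd (Finset.mem_range.2 (Nat.succ_pos n)) h
    · intro k _
      exact (hint (qtQ q t v w k)).const_mul _
  rw [hFock, hMom]
end

section
/- Suppose dim H ≥ 2 and dim H̄ ≥ 2. If the vacuum state φ is a trace on the von Neumann algebra generated by the quadrabasic Gaussian operators {G_{ξ⊗η}}, i.e., φ(G₁G₂G₃G₄) = φ(G₂G₃G₄G₁) for all choices of vectors, then necessarily q = v = 0 and t = w = 1. Specifically: from the fourth-moment formula, traciality forces 1 − tv − tw = 0 (taking ξ₁=ξ₂ ⊥ ξ₃=ξ₄ unit vectors and all η_i equal and unitary) and 1 − tw = 0 (taking additionally η₁=η₂ ⊥ η₃=η₄), whence (with |t|,|w| ≤ 1) t = w = 1 and v = 0; symmetrically q = 0. -/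
/-!
Cyclic invariance is tested on orthonormal pairs `e₀ ⊥ e₁` in `H` and `u₀ ⊥ u₁` in `K`, where
every inner product is `0` or `1`, so each test collapses to one relation among the parameters:
`tv + tw = 1`, `tw = 1` and `qw = 0`. Since `0 ≤ t ≤ 1` and `w ≤ 1`, `tw = 1` forces `t = w = 1`,
and then the other two relations give `v = 0` and `q = 0`.
-/

open scoped RealInnerProductSpace

/-- The fourth mixed moment of quadrabasic Gaussian operators, as a function of the
eight vectors. -/
noncomputable def fourthMoment {H K : Type*} [NormedAddCommGroup H] [InnerProductSpace ℝ H]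
    [NormedAddCommGroup K] [InnerProductSpace ℝ K] (q t v w : ℝ)
    (ξ₁ ξ₂ ξ₃ ξ₄ : H) (η₁ η₂ η₃ η₄ : K) : ℝ :=
  ⟪ξ₁, ξ₂⟫ * ⟪ξ₃, ξ₄⟫ * ⟪η₁, η₂⟫ * ⟪η₃, η₄⟫ +
  q * v * (⟪ξ₁, ξ₃⟫ * ⟪ξ₂, ξ₄⟫ * ⟪η₁, η₃⟫ * ⟪η₂, η₄⟫) +
  q * w * (⟪ξ₁, ξ₃⟫ * ⟪ξ₂, ξ₄⟫ * ⟪η₁, η₄⟫ * ⟪η₂, η₃⟫) +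
  t * v * (⟪ξ₁, ξ₄⟫ * ⟪ξ₂, ξ₃⟫ * ⟪η₁, η₃⟫ * ⟪η₂, η₄⟫) +
  t * w * (⟪ξ₁, ξ₄⟫ * ⟪ξ₂, ξ₃⟫ * ⟪η₁, η₄⟫ * ⟪η₂, η₃⟫)

theorem exists_orthonormal_of_le_rank {𝕜 E : Type*} [RCLike 𝕜] [NormedAddCommGroup E]
    [InnerProductSpace 𝕜 E] {n : ℕ} (hn : n ≤ Module.rank 𝕜 E) :
    ∃ e : Fin n → E, Orthonormal 𝕜 e :=
  have ⟨_, hf⟩ := exists_linearIndependent_of_le_rank hn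
  ⟨_, InnerProductSpace.gramSchmidtNormed_orthonormal hf⟩

theorem eq_one_and_eq_one_of_mul_eq_one {α : Type*} [CommRing α] [LinearOrder α]
    [IsStrictOrderedRing α] {a b : α} (ha : 0 ≤ a) (ha₁ : a ≤ 1) (hb₁ : b ≤ 1)
    (hab : a * b = 1) : a = 1 ∧ b = 1 := by
  obtain rfl : a = 1 := by nlinarith [mul_le_mul_of_nonneg_left hb₁ ha]
  simpa using hab

/-- Traciality of the vacuum state, read off from the fourth moments. -/
def FourthMomentIsTracial (H K : Type*) [NormedAddCommGroup H] [InnerProductSpace ℝ H]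
    [NormedAddCommGroup K] [InnerProductSpace ℝ K] (q t v w : ℝ) : Prop :=
  ∀ (ξ₁ ξ₂ ξ₃ ξ₄ : H) (η₁ η₂ η₃ η₄ : K),
    fourthMoment q t v w ξ₁ ξ₂ ξ₃ ξ₄ η₁ η₂ η₃ η₄ = fourthMoment q t v w ξ₂ ξ₃ ξ₄ ξ₁ η₂ η₃ η₄ η₁

namespace FourthMomentIsTracial

variable {H K : Type*} [NormedAddCommGroup H] [InnerProductSpace ℝ H]
  [NormedAddCommGroup K] [InnerProductSpace ℝ K] {q t v w : ℝ}
  (htr : FourthMomentIsTracial H K q t v w) {e : Fin 2 → H} (he : Orthonormal ℝ e)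
  {u : Fin 2 → K} (hu : Orthonormal ℝ u)
include htr he hu

theorem t_mul_v_add_t_mul_w_eq_one : t * v + t * w = 1 := by
  have := htr (e 0) (e 0) (e 1) (e 1) (u 0) (u 0) (u 0) (u 0)
  simp only [fourthMoment, orthonormal_iff_ite.mp he, orthonormal_iff_ite.mp hu] at this
  norm_num at this
  linarith

theorem t_mul_w_eq_one : t * w = 1 := by
  have := htr (e 0) (e 0) (e 1) (e 1) (u 0) (u 0) (u 1) (u 1)
  simp only [fourthMoment, orthonormal_iff_ite.mp he, orthonormal_iff_ite.mp hu] at this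
  norm_num at this
  linarith

theorem q_mul_w_eq_zero : q * w = 0 := by
  have := htr (e 0) (e 1) (e 0) (e 1) (u 0) (u 0) (u 1) (u 1)
  simp only [fourthMoment, orthonormal_iff_ite.mp he, orthonormal_iff_ite.mp hu] at this
  norm_num at this
  exact mul_eq_zero.mpr this

end FourthMomentIsTracial

theorem trace_implies_free_general {H K : Type*} [NormedAddCommGroup H] [InnerProductSpace ℝ H]
    [NormedAddCommGroup K] [InnerProductSpace ℝ K]
    (hH : 2 ≤ Module.rank ℝ H) (hK : 2 ≤ Module.rank ℝ K)
    (q t v w : ℝ) (hq : |q| ≤ t) (ht : t ≤ 1) (hw : w ≤ 1)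
    (htrace : ∀ (ξ₁ ξ₂ ξ₃ ξ₄ : H) (η₁ η₂ η₃ η₄ : K),
      fourthMoment q t v w ξ₁ ξ₂ ξ₃ ξ₄ η₁ η₂ η₃ η₄ =
        fourthMoment q t v w ξ₂ ξ₃ ξ₄ ξ₁ η₂ η₃ η₄ η₁) :
    q = 0 ∧ v = 0 ∧ t = 1 ∧ w = 1 := by
  have htr : FourthMomentIsTracial H K q t v w := htrace
  obtain ⟨e, he⟩ := exists_orthonormal_of_le_rank (n := 2) (by exact_mod_cast hH)
  obtain ⟨u, hu⟩ := exists_orthonormal_of_le_rank (n := 2) (by exact_mod_cast hK)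
  have htv := htr.t_mul_v_add_t_mul_w_eq_one he hu
  have hqw := htr.q_mul_w_eq_zero he hu
  obtain ⟨rfl, rfl⟩ := eq_one_and_eq_one_of_mul_eq_one ((abs_nonneg q).trans hq) ht hw
    (htr.t_mul_w_eq_one he hu)
  exact ⟨by simpa using hqw, by linarith, rfl, rfl⟩

/-- If `dim H ≥ 2` and `dim K ≥ 2`, `|q| ≤ t ≤ 1`, `|v| ≤ w ≤ 1`, and the vacuum state
on the quadrabasic Gaussian algebra is a trace — i.e. the fourth mixed moment
`φ(G₁G₂G₃G₄)` is invariant under the cyclic shift `(1,2,3,4) ↦ (2,3,4,1)` for all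
choices of vectors — then necessarily `q = v = 0` and `t = w = 1`. -/
theorem trace_implies_free {H K : Type*} [NormedAddCommGroup H] [InnerProductSpace ℝ H]
    [NormedAddCommGroup K] [InnerProductSpace ℝ K]
    (hH : 2 ≤ Module.rank ℝ H) (hK : 2 ≤ Module.rank ℝ K)
    (q t v w : ℝ) (hq : |q| ≤ t) (ht : t ≤ 1) (hv : |v| ≤ w) (hw : w ≤ 1)
    (htrace : ∀ (ξ₁ ξ₂ ξ₃ ξ₄ : H) (η₁ η₂ η₃ η₄ : K),
      fourthMoment q t v w ξ₁ ξ₂ ξ₃ ξ₄ η₁ η₂ η₃ η₄ =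
        fourthMoment q t v w ξ₂ ξ₃ ξ₄ ξ₁ η₂ η₃ η₄ η₁) :
    q = 0 ∧ v = 0 ∧ t = 1 ∧ w = 1 :=
  trace_implies_free_general hH hK q t v w hq ht hw htrace
end
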